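/- For every R > 0, the set {A ∈ ℝ^{I₁ × ⋯ × I_N} : rank_⊥(A) ≤ R} is closed in ℝ^{I₁ × ⋯ × I_N}; equivalently, the orthogonal rank function A ↦ rank_⊥(A) is lower semicontinuous. -/

import Mathlib

open scoped BigOperators

/-- The outer product of vectors `v n ∈ ℝ^{I n}`. -/
noncomputable def outer {N : ℕ} {I : Fin N → ℕ}
    (v : (n : Fin N) → EuclideanSpace ℝ (Fin (I n))) :
    EuclideanSpace ℝ ((n : Fin N) → Fin (I n)) :=
  (WithLp.equiv 2 _).symm (fun i => ∏ n, v n (i n))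

/-- The orthogonal rank. -/
noncomputable def orank {N : ℕ} {I : Fin N → ℕ}
    (A : EuclideanSpace ℝ ((n : Fin N) → Fin (I n))) : ℕ :=
  sInf {R : ℕ | ∃ v : Fin R → (n : Fin N) → EuclideanSpace ℝ (Fin (I n)),
    A = ∑ r, outer (v r) ∧
    ∀ s t : Fin R, s ≠ t → (inner ℝ (outer (v s)) (outer (v t)) : ℝ) = 0}

lemma outer_apply {N : ℕ} {I : Fin N → ℕ} (v : (n : Fin N) → EuclideanSpace ℝ (Fin (I n)))
    (i : (n : Fin N) → Fin (I n)) : outer v i = ∏ n, v n (i n) := rfl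

lemma inner_outer {N : ℕ} {I : Fin N → ℕ} (u w : (n : Fin N) → EuclideanSpace ℝ (Fin (I n))) :
    (inner ℝ (outer u) (outer w) : ℝ) = ∏ n, (inner ℝ (u n) (w n) : ℝ) := by
  classical
  simp only [PiLp.inner_apply, RCLike.inner_apply, conj_trivial, outer_apply]
  rw [Fintype.prod_sum fun n (j : Fin (I n)) => w n j * u n j]
  exact Finset.sum_congr rfl fun i _ => (Finset.prod_mul_distrib).symm

lemma norm_outer_sq {N : ℕ} {I : Fin N → ℕ} (v : (n : Fin N) → EuclideanSpace ℝ (Fin (I n))) :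
    ‖outer v‖ ^ 2 = ∏ n, ‖v n‖ ^ 2 := by
  rw [← real_inner_self_eq_norm_sq, inner_outer]
  exact Finset.prod_congr rfl fun n _ => real_inner_self_eq_norm_sq _

lemma outer_update_smul {N : ℕ} {I : Fin N → ℕ}
    (v : (n : Fin N) → EuclideanSpace ℝ (Fin (I n))) (k : Fin N) (c : ℝ) :
    outer (Function.update v k (c • v k)) = c • outer v := by
  classical
  ext i
  simp only [outer_apply, PiLp.smul_apply, smul_eq_mul]
  have h : ∀ n, (Function.update v k (c • v k)) n (i n)
      = Function.update (fun m => v m (i m)) k ((c • v k) (i k)) n := by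
    intro n
    exact Function.apply_update (fun m (x : EuclideanSpace ℝ (Fin (I m))) => x (i m)) v k _ n
  rw [Finset.prod_congr rfl fun n _ => h n, Finset.prod_update_of_mem (Finset.mem_univ k),
    Finset.prod_eq_mul_prod_sdiff_singleton_of_mem (Finset.mem_univ k) (fun m => v m (i m))]
  simp only [PiLp.smul_apply, smul_eq_mul]
  ring

lemma pyth {N : ℕ} {I : Fin N → ℕ} {R : ℕ}
    (T : Fin R → EuclideanSpace ℝ ((n : Fin N) → Fin (I n)))
    (h : ∀ s t, s ≠ t → (inner ℝ (T s) (T t) : ℝ) = 0) :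
    ‖∑ r, T r‖ ^ 2 = ∑ r, ‖T r‖ ^ 2 := by
  rw [← real_inner_self_eq_norm_sq, sum_inner]
  refine Finset.sum_congr rfl fun s _ => ?_
  rw [inner_sum, Finset.sum_eq_single s]
  · exact real_inner_self_eq_norm_sq _
  · exact fun t _ hts => h s t fun hst => hts hst.symm
  · simp

lemma outer_zero {N' : ℕ} {I : Fin (N' + 1) → ℕ} :
    outer (fun n => (0 : EuclideanSpace ℝ (Fin (I n)))) = 0 := by
  ext i
  simp [outer_apply]

lemma continuous_outer {N : ℕ} {I : Fin N → ℕ} :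
    Continuous (fun v : (n : Fin N) → EuclideanSpace ℝ (Fin (I n)) => outer v) := by
  refine (PiLp.continuous_toLp 2 _).comp ?_
  refine continuous_pi fun i => continuous_finset_prod _ fun n _ => ?_
  exact ((continuous_apply (i n)).comp (PiLp.continuous_ofLp 2 _)).comp (continuous_apply n)

lemma outer_single {N : ℕ} {I : Fin N → ℕ} (j : (n : Fin N) → Fin (I n)) :
    outer (fun n => EuclideanSpace.single (j n) (1 : ℝ)) = EuclideanSpace.single j 1 := by
  classical
  ext i
  simp only [outer_apply, EuclideanSpace.single_apply]
  rw [Finset.prod_boole]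
  simp [funext_iff]

lemma sum_single {N : ℕ} {I : Fin N → ℕ} (A : EuclideanSpace ℝ ((n : Fin N) → Fin (I n))) :
    A = ∑ j, A j • EuclideanSpace.single j (1 : ℝ) := by
  classical
  ext i
  have : (∑ j, A j • EuclideanSpace.single j (1:ℝ)) i
      = ∑ j, (A j • EuclideanSpace.single j (1:ℝ)) i := by
    rw [WithLp.ofLp_sum, Finset.sum_apply]
  rw [this]
  simp [EuclideanSpace.single_apply]

lemma exists_decomp {N' : ℕ} {I : Fin (N' + 1) → ℕ}
    (A : EuclideanSpace ℝ ((n : Fin (N' + 1)) → Fin (I n))) :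
    ∃ (R₀ : ℕ) (v : Fin R₀ → (n : Fin (N' + 1)) → EuclideanSpace ℝ (Fin (I n))),
      A = ∑ r, outer (v r) ∧
      ∀ s t, s ≠ t → (inner ℝ (outer (v s)) (outer (v t)) : ℝ) = 0 := by
  classical
  have e : Fin (Fintype.card ((n : Fin (N' + 1)) → Fin (I n))) ≃ ((n : Fin (N' + 1)) → Fin (I n)) :=
    (Fintype.equivFin _).symm
  refine ⟨Fintype.card ((n : Fin (N' + 1)) → Fin (I n)), fun r =>
    Function.update (fun n => EuclideanSpace.single (e r n) (1 : ℝ)) 0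
      (A (e r) • EuclideanSpace.single (e r 0) 1), ?_, ?_⟩
  · have houter : ∀ r, outer (Function.update (fun n => EuclideanSpace.single (e r n) (1 : ℝ)) 0
        (A (e r) • EuclideanSpace.single (e r 0) 1))
        = A (e r) • EuclideanSpace.single (e r) 1 := by
      intro r
      rw [outer_update_smul (fun n => EuclideanSpace.single (e r n) (1 : ℝ)) 0 (A (e r)),
        outer_single]
    rw [Finset.sum_congr rfl fun r _ => houter r]
    rw [Equiv.sum_comp e (fun j => A j • EuclideanSpace.single j (1 : ℝ))]
    exact sum_single A
  · intro s t hst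
    rw [outer_update_smul (fun n => EuclideanSpace.single (e s n) (1 : ℝ)) 0 (A (e s)),
      outer_update_smul (fun n => EuclideanSpace.single (e t n) (1 : ℝ)) 0 (A (e t)),
      outer_single, outer_single, real_inner_smul_left, real_inner_smul_right,
      EuclideanSpace.inner_single_left]
    have h0 : EuclideanSpace.single (e t) (1 : ℝ) (e s) = 0 := by
      rw [EuclideanSpace.single_apply, if_neg]
      exact fun hc => hst (e.injective hc)
    rw [h0]
    ring

lemma orank_le_iff {N' : ℕ} {I : Fin (N' + 1) → ℕ} {R : ℕ}
    (A : EuclideanSpace ℝ ((n : Fin (N' + 1)) → Fin (I n))) :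
    orank A ≤ R ↔ ∃ v : Fin R → (n : Fin (N' + 1)) → EuclideanSpace ℝ (Fin (I n)),
      A = ∑ r, outer (v r) ∧
      ∀ s t : Fin R, s ≠ t → (inner ℝ (outer (v s)) (outer (v t)) : ℝ) = 0 := by
  classical
  constructor
  · intro h
    have hne : {R : ℕ | ∃ v : Fin R → (n : Fin (N' + 1)) → EuclideanSpace ℝ (Fin (I n)),
        A = ∑ r, outer (v r) ∧
        ∀ s t : Fin R, s ≠ t → (inner ℝ (outer (v s)) (outer (v t)) : ℝ) = 0}.Nonempty := by
      obtain ⟨R₀, v, h1, h2⟩ := exists_decomp A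
      exact ⟨R₀, v, h1, h2⟩
    have hmem := Nat.sInf_mem hne
    obtain ⟨v, hsum, horth⟩ := hmem
    have hle : orank A ≤ R := h
    set f : ℕ → EuclideanSpace ℝ ((n : Fin (N' + 1)) → Fin (I n)) :=
      fun k => if hk : k < orank A then outer (v ⟨k, hk⟩) else 0 with hf
    refine ⟨fun r => if hr : (r : ℕ) < orank A then v ⟨r, hr⟩ else fun _ => 0, ?_, ?_⟩
    · have h1 : ∀ r : Fin R, outer (if hr : (r : ℕ) < orank A then v ⟨r, hr⟩ else fun _ => 0)
          = f r := by
        intro r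
        by_cases hr : (r : ℕ) < orank A
        · simp only [hf, dif_pos hr]
        · simp only [hf, dif_neg hr]
          exact outer_zero
      have e1 : ∑ r : Fin R, outer (if hr : (r : ℕ) < orank A then v ⟨r, hr⟩ else fun _ => 0)
          = ∑ r : Fin R, f r := Finset.sum_congr rfl fun r _ => h1 r
      have e2 : ∑ r : Fin R, f r = ∑ k ∈ Finset.range R, f k := Fin.sum_univ_eq_sum_range f R
      have e3 : ∑ k ∈ Finset.range (orank A), f k = ∑ k ∈ Finset.range R, f k := by
        refine Finset.sum_subset (Finset.range_subset_range.2 hle) fun k _ hk => ?_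
        simp only [hf]
        rw [dif_neg fun hc => hk (Finset.mem_range.2 hc)]
      have e4 : ∑ r : Fin (orank A), f r = ∑ k ∈ Finset.range (orank A), f k :=
        Fin.sum_univ_eq_sum_range f (orank A)
      have e5 : ∑ r : Fin (orank A), f r = ∑ r, outer (v r) := by
        refine Finset.sum_congr rfl fun r _ => ?_
        simp only [hf]
        rw [dif_pos (show (r : ℕ) < orank A from r.isLt)]
        rfl
      rw [e1, e2, ← e3, ← e4, e5]
      exact hsum
    · intro s t hst
      by_cases hs : (s : ℕ) < orank A
      · by_cases ht : (t : ℕ) < orank A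
        · simp only [dif_pos hs, dif_pos ht]
          exact horth ⟨s, hs⟩ ⟨t, ht⟩ fun hc =>
            hst (Fin.ext (Fin.mk.inj hc))
        · simp only [dif_neg ht]
          rw [outer_zero, inner_zero_right]
      · simp only [dif_neg hs]
        rw [outer_zero, inner_zero_left]
  · rintro ⟨v, h1, h2⟩
    exact Nat.sInf_le ⟨v, h1, h2⟩

lemma isClosed_D {N' : ℕ} {I : Fin (N' + 1) → ℕ} (R : ℕ) :
    IsClosed {A : EuclideanSpace ℝ ((n : Fin (N' + 1)) → Fin (I n)) |
      ∃ v : Fin R → (n : Fin (N' + 1)) → EuclideanSpace ℝ (Fin (I n)),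
        A = ∑ r, outer (v r) ∧
        ∀ s t : Fin R, s ≠ t → (inner ℝ (outer (v s)) (outer (v t)) : ℝ) = 0} := by
  classical
  set D := {A : EuclideanSpace ℝ ((n : Fin (N' + 1)) → Fin (I n)) |
      ∃ v : Fin R → (n : Fin (N' + 1)) → EuclideanSpace ℝ (Fin (I n)),
        A = ∑ r, outer (v r) ∧
        ∀ s t : Fin R, s ≠ t → (inner ℝ (outer (v s)) (outer (v t)) : ℝ) = 0} with hD
  set G : (Fin R → ℝ) × (Fin R → (n : Fin (N' + 1)) → EuclideanSpace ℝ (Fin (I n))) →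
      EuclideanSpace ℝ ((n : Fin (N' + 1)) → Fin (I n)) :=
    fun p => ∑ r, p.1 r • outer (p.2 r) with hG
  have hGcont : Continuous G := by
    refine continuous_finset_sum _ fun r _ => ?_
    exact ((continuous_apply r).comp continuous_fst).smul
      (continuous_outer.comp ((continuous_apply r).comp continuous_snd))
  set K : ℝ → Set ((Fin R → ℝ) × (Fin R → (n : Fin (N' + 1)) → EuclideanSpace ℝ (Fin (I n)))) :=
    fun c => {p | (∀ r, |p.1 r| ≤ c) ∧ (∀ r n, ‖p.2 r n‖ ≤ 1) ∧
      (∀ s t, s ≠ t → (inner ℝ (p.1 s • outer (p.2 s)) (p.1 t • outer (p.2 t)) : ℝ) = 0) ∧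
      ‖G p‖ ≤ c} with hKdef
  have hKcl : ∀ c, IsClosed (K c) := by
    intro c
    have e : K c = {p : (Fin R → ℝ) × (Fin R → (n : Fin (N' + 1)) → EuclideanSpace ℝ (Fin (I n)))
          | ∀ r, |p.1 r| ≤ c}
        ∩ ({p | ∀ r n, ‖p.2 r n‖ ≤ 1}
        ∩ ({p | ∀ s t, s ≠ t → (inner ℝ (p.1 s • outer (p.2 s)) (p.1 t • outer (p.2 t)) : ℝ) = 0}
        ∩ {p | ‖G p‖ ≤ c})) := rfl
    rw [e]
    refine IsClosed.inter ?_ (IsClosed.inter ?_ (IsClosed.inter ?_ ?_))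
    · rw [Set.setOf_forall]
      exact isClosed_iInter fun r => isClosed_le
        (((continuous_apply r).comp continuous_fst).abs) continuous_const
    · rw [Set.setOf_forall]
      refine isClosed_iInter fun r => ?_
      rw [Set.setOf_forall]
      exact isClosed_iInter fun n => isClosed_le
        (continuous_norm.comp ((continuous_apply n).comp ((continuous_apply r).comp
          continuous_snd))) continuous_const
    · rw [Set.setOf_forall]
      refine isClosed_iInter fun s => ?_
      rw [Set.setOf_forall]
      refine isClosed_iInter fun t => ?_
      by_cases hst : s = t
      · simp [hst]
      · have e2 : {p : (Fin R → ℝ) × (Fin R → (n : Fin (N' + 1)) → EuclideanSpace ℝ (Fin (I n)))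
            | s ≠ t → (inner ℝ (p.1 s • outer (p.2 s)) (p.1 t • outer (p.2 t)) : ℝ) = 0}
            = {p | (inner ℝ (p.1 s • outer (p.2 s)) (p.1 t • outer (p.2 t)) : ℝ) = 0} := by
          ext p; simp [hst]
        rw [e2]
        refine isClosed_eq ?_ continuous_const
        exact Continuous.inner
          (((continuous_apply s).comp continuous_fst).smul
            (continuous_outer.comp ((continuous_apply s).comp continuous_snd)))
          (((continuous_apply t).comp continuous_fst).smul
            (continuous_outer.comp ((continuous_apply t).comp continuous_snd)))
    · exact isClosed_le (continuous_norm.comp hGcont) continuous_const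
  have hKcpt : ∀ c, IsCompact (K c) := by
    intro c
    have hbox : IsCompact ((Set.univ.pi fun _ : Fin R => Set.Icc (-c) c) ×ˢ
        (Set.univ.pi fun _ : Fin R => Set.univ.pi fun n => Metric.closedBall
          (0 : EuclideanSpace ℝ (Fin (I n))) 1)) :=
      (isCompact_univ_pi fun _ => isCompact_Icc).prod
        (isCompact_univ_pi fun _ => isCompact_univ_pi fun n =>
          isCompact_closedBall (0 : EuclideanSpace ℝ (Fin (I n))) 1)
    refine IsCompact.of_isClosed_subset hbox (hKcl c) ?_
    rintro p ⟨h1, h2, -, -⟩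
    refine ⟨fun r _ => abs_le.mp (h1 r), fun r _ => fun n _ => ?_⟩
    exact Metric.mem_closedBall.2 (by rw [dist_zero_right]; exact h2 r n)
  have himg : ∀ c : ℝ, ∀ p ∈ K c, G p ∈ D := by
    intro c p hp
    obtain ⟨-, -, h3, -⟩ := hp
    refine ⟨fun r => Function.update (p.2 r) 0 (p.1 r • p.2 r 0), ?_, ?_⟩
    · exact Finset.sum_congr rfl fun r _ => (outer_update_smul (p.2 r) 0 (p.1 r)).symm
    · intro s t hst
      rw [outer_update_smul (p.2 s) 0 (p.1 s), outer_update_smul (p.2 t) 0 (p.1 t)]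
      exact h3 s t hst
  have hin : ∀ c : ℝ, ∀ A ∈ D, ‖A‖ ≤ c → A ∈ G '' K c := by
    intro c A hA hAc
    obtain ⟨v, hsum, horth⟩ := hA
    set σ : Fin R → ℝ := fun r => ∏ n, ‖v r n‖ with hσ
    set u : Fin R → (n : Fin (N' + 1)) → EuclideanSpace ℝ (Fin (I n)) :=
      fun r n => ‖v r n‖⁻¹ • v r n with hu
    have hvu : ∀ r n, ‖v r n‖ • u r n = v r n := by
      intro r n
      by_cases hv : v r n = 0
      · simp [hu, hv]
      · rw [hu]
        rw [smul_smul, mul_inv_cancel₀ (norm_ne_zero_iff.2 hv), one_smul]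
    have houter : ∀ r, outer (v r) = σ r • outer (u r) := by
      intro r
      ext i
      rw [outer_apply, PiLp.smul_apply, outer_apply, smul_eq_mul]
      calc ∏ n, v r n (i n) = ∏ n, (‖v r n‖ • u r n) (i n) := by
            exact Finset.prod_congr rfl fun n _ => by rw [hvu]
        _ = ∏ n, ‖v r n‖ * u r n (i n) := by
            exact Finset.prod_congr rfl fun n _ => by rw [PiLp.smul_apply, smul_eq_mul]
        _ = (∏ n, ‖v r n‖) * ∏ n, u r n (i n) := Finset.prod_mul_distrib
    have hσ0 : ∀ r, 0 ≤ σ r := fun r => Finset.prod_nonneg fun n _ => norm_nonneg _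
    have hc0 : 0 ≤ c := le_trans (norm_nonneg A) hAc
    have hA2 : ‖A‖ ^ 2 = ∑ r, ‖outer (v r)‖ ^ 2 := by
      rw [hsum]; exact pyth _ horth
    have hσc : ∀ r, |σ r| ≤ c := by
      intro r
      have hsq : σ r ^ 2 ≤ c ^ 2 := by
        calc σ r ^ 2 = ∏ n, ‖v r n‖ ^ 2 := by rw [hσ, ← Finset.prod_pow]
          _ = ‖outer (v r)‖ ^ 2 := (norm_outer_sq _).symm
          _ ≤ ∑ t, ‖outer (v t)‖ ^ 2 :=
              Finset.single_le_sum (f := fun t => ‖outer (v t)‖ ^ 2)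
                (fun t _ => sq_nonneg _) (Finset.mem_univ r)
          _ = ‖A‖ ^ 2 := hA2.symm
          _ ≤ c ^ 2 := pow_le_pow_left₀ (norm_nonneg A) hAc 2
      have h2 := Real.sqrt_le_sqrt hsq
      rw [Real.sqrt_sq (hσ0 r), Real.sqrt_sq hc0] at h2
      rwa [abs_of_nonneg (hσ0 r)]
    have huc : ∀ r n, ‖u r n‖ ≤ 1 := by
      intro r n
      rw [hu]
      rw [norm_smul, norm_inv, norm_norm]
      by_cases hv : v r n = 0
      · simp [hv]
      · rw [inv_mul_cancel₀ (norm_ne_zero_iff.2 hv)]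
    have hGA : G (σ, u) = A := by
      rw [hG]
      exact (Finset.sum_congr rfl fun r _ => (houter r).symm).trans hsum.symm
    refine ⟨(σ, u), ⟨hσc, huc, ?_, ?_⟩, hGA⟩
    · intro s t hst
      rw [show (σ, u).1 s • outer ((σ, u).2 s) = outer (v s) from (houter s).symm,
        show (σ, u).1 t • outer ((σ, u).2 t) = outer (v t) from (houter t).symm]
      exact horth s t hst
    · rw [hGA]; exact hAc
  refine isClosed_of_closure_subset ?_
  intro a ha
  have h1 : D ∩ Metric.closedBall a 1 ⊆ G '' K (‖a‖ + 1) := by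
    rintro A ⟨hAD, hAb⟩
    refine hin (‖a‖ + 1) A hAD ?_
    have hd : ‖A - a‖ ≤ 1 := by
      rw [← dist_eq_norm]
      exact Metric.mem_closedBall.1 hAb
    calc ‖A‖ = ‖a + (A - a)‖ := by rw [add_sub_cancel]
      _ ≤ ‖a‖ + ‖A - a‖ := norm_add_le _ _
      _ ≤ ‖a‖ + 1 := by linarith
  have h2 : a ∈ closure (D ∩ Metric.closedBall a 1) := by
    rw [mem_closure_iff_nhds] at ha ⊢
    intro t ht
    obtain ⟨x, hx⟩ := ha (t ∩ Metric.closedBall a 1)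
      (Filter.inter_mem ht (Metric.closedBall_mem_nhds a one_pos))
    exact ⟨x, hx.1.1, hx.2, hx.1.2⟩
  have h3 : a ∈ G '' K (‖a‖ + 1) :=
    ((hKcpt _).image hGcont).isClosed.closure_subset ((closure_mono h1) h2)
  obtain ⟨p, hp, hpa⟩ := h3
  rw [← hpa]
  exact himg _ p hp

/-- For every `R`, the set of tensors of orthogonal rank at most `R` is closed;
equivalently, orthogonal rank is lower semicontinuous. -/
theorem isClosed_orank_le {N : ℕ} {I : Fin N → ℕ} (R : ℕ) (hR : 0 < R) :
    IsClosed {A : EuclideanSpace ℝ ((n : Fin N) → Fin (I n)) | orank A ≤ R} := by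
  cases N with
  | zero =>
      have huniv : {A : EuclideanSpace ℝ ((n : Fin 0) → Fin (I n)) | orank A ≤ R}
          = Set.univ := by
        refine Set.eq_univ_of_forall fun A => ?_
        have hbound : ∀ m ∈ {m : ℕ | ∃ v : Fin m → (n : Fin 0) → EuclideanSpace ℝ (Fin (I n)),
            A = ∑ r, outer (v r) ∧ ∀ s t : Fin m, s ≠ t →
              (inner ℝ (outer (v s)) (outer (v t)) : ℝ) = 0}, m ≤ 1 := by
          rintro m ⟨v, -, horth⟩
          by_contra hm
          push_neg at hm
          have h01 : (⟨0, by omega⟩ : Fin m) ≠ ⟨1, by omega⟩ :=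
            Fin.ne_of_val_ne (by simp)
          have hz := horth ⟨0, by omega⟩ ⟨1, by omega⟩ h01
          rw [inner_outer] at hz
          simp at hz
        show orank A ≤ R
        by_cases hne : {m : ℕ | ∃ v : Fin m → (n : Fin 0) → EuclideanSpace ℝ (Fin (I n)),
            A = ∑ r, outer (v r) ∧ ∀ s t : Fin m, s ≠ t →
              (inner ℝ (outer (v s)) (outer (v t)) : ℝ) = 0}.Nonempty
        · exact le_trans (hbound _ (Nat.sInf_mem hne)) hR
        · rw [orank, Set.not_nonempty_iff_eq_empty.1 hne, Nat.sInf_empty]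
          exact Nat.zero_le R
      rw [huniv]
      exact isClosed_univ
  | succ N' =>
      have he : {A : EuclideanSpace ℝ ((n : Fin (N' + 1)) → Fin (I n)) | orank A ≤ R}
          = {A : EuclideanSpace ℝ ((n : Fin (N' + 1)) → Fin (I n)) |
              ∃ v : Fin R → (n : Fin (N' + 1)) → EuclideanSpace ℝ (Fin (I n)),
                A = ∑ r, outer (v r) ∧
                ∀ s t : Fin R, s ≠ t → (inner ℝ (outer (v s)) (outer (v t)) : ℝ) = 0} :=
        Set.ext fun A => orank_le_iff A
      rw [he]
      exact isClosed_D R
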